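/- arXiv:2002.01040 — 3 statements merged into one kernel-verified Lean document; each statement's English description precedes it below -/
import Mathlib

section
/- Let p, q be positive integers, let μ ∈ ℝᵖ, η ∈ ℝ^q, let Σ be a positive definite p×p real matrix, let Ω be a positive definite q×q real matrix, and let A be a p×q real matrix. Set Λ := (Ω⁻¹ + AᵀΣ⁻¹A)⁻¹ (which exists since Ω⁻¹ + AᵀΣ⁻¹A is positive definite). Then for all y ∈ ℝᵖ and x ∈ ℝ^q, φ_p(y; μ + A x, Σ) · φ_q(x; η, Ω) = φ_p(y; μ + A η, Σ + A Ω Aᵀ) · φ_q(x; η + Λ Aᵀ Σ⁻¹ (y − μ − A η), Λ). -/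
/-
Both sides are products of a constant, a power of a determinant and the exponential of a
quadratic form, so it suffices to match determinants and quadratic forms. With `z = y - μ - Aη`,
`u = x - η` and `K = Ω⁻¹ + AᵀΣ⁻¹A = Λ⁻¹`, completing the square in `u` gives
`(z - Au)ᵀΣ⁻¹(z - Au) + uᵀΩ⁻¹u = zᵀ(Σ⁻¹ - Σ⁻¹AΛAᵀΣ⁻¹)z + (u - ΛAᵀΣ⁻¹z)ᵀK(u - ΛAᵀΣ⁻¹z)`,
and the Woodbury identity turns the first matrix on the right into `(Σ + AΩAᵀ)⁻¹`. On the
determinant side, the matrix determinant lemma gives `det(Σ + AΩAᵀ) = det Σ · det Ω · det K`.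
-/

open MeasureTheory Matrix Real Set

/-- The `p`-variate normal density with mean `μ` and covariance matrix `S`. -/
noncomputable def gaussPdf {p : ℕ} (μ : Fin p → ℝ) (S : Matrix (Fin p) (Fin p) ℝ)
    (x : Fin p → ℝ) : ℝ :=
  (2 * Real.pi) ^ (-(p : ℝ) / 2) * S.det ^ (-(1 : ℝ) / 2) *
    Real.exp (-(1 / 2) * ((x - μ) ⬝ᵥ (S⁻¹ *ᵥ (x - μ))))

namespace Matrix

variable {m n R : Type*} [Fintype m] [Fintype n] [CommRing R]

lemma IsSymm.dotProduct_mulVec_comm {M : Matrix n n R} (hM : M.IsSymm) (v w : n → R) :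
    v ⬝ᵥ M *ᵥ w = w ⬝ᵥ M *ᵥ v := by
  rw [dotProduct_mulVec, ← mulVec_transpose, hM.eq, dotProduct_comm]

lemma dotProduct_mulVec_completeSquare [DecidableEq n] {P : Matrix m m R} {Q : Matrix n n R}
    (hP : P.IsSymm) (hQ : Q.IsSymm) (A : Matrix m n R) {Λ : Matrix n n R}
    (hΛ : (Q + Aᵀ * P * A) * Λ = 1) (z : m → R) (u : n → R) :
    (z - A *ᵥ u) ⬝ᵥ P *ᵥ (z - A *ᵥ u) + u ⬝ᵥ Q *ᵥ u =
      z ⬝ᵥ (P - P * A * Λ * Aᵀ * P) *ᵥ z +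
        (u - Λ *ᵥ (Aᵀ *ᵥ (P *ᵥ z))) ⬝ᵥ (Q + Aᵀ * P * A) *ᵥ (u - Λ *ᵥ (Aᵀ *ᵥ (P *ᵥ z))) := by
  set K := Q + Aᵀ * P * A
  set t := Aᵀ *ᵥ (P *ᵥ z)
  -- both sides expand to `z ⬝ᵥ P *ᵥ z - 2 (u ⬝ᵥ t) + u ⬝ᵥ K *ᵥ u`
  have hK : K.IsSymm :=
    hQ.add (by simp [IsSymm, Matrix.transpose_mul, hP.eq, Matrix.mul_assoc])
  have hKΛ : K *ᵥ (Λ *ᵥ t) = t := by rw [mulVec_mulVec, hΛ, one_mulVec]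
  have hcross : z ⬝ᵥ P *ᵥ (A *ᵥ u) = u ⬝ᵥ t := by
    rw [hP.dotProduct_mulVec_comm, dotProduct_comm, ← dotProduct_transpose_mulVec]
  have hcorr : z ⬝ᵥ (P * A * Λ * Aᵀ * P) *ᵥ z = t ⬝ᵥ Λ *ᵥ t := by
    simp only [← mulVec_mulVec]
    rw [hP.dotProduct_mulVec_comm, dotProduct_comm, ← dotProduct_transpose_mulVec,
      dotProduct_comm]
  have hAu : A *ᵥ u ⬝ᵥ P *ᵥ (A *ᵥ u) = u ⬝ᵥ (Aᵀ * P * A) *ᵥ u := by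
    rw [dotProduct_comm, ← dotProduct_transpose_mulVec, mulVec_mulVec, mulVec_mulVec]
  have hKu : u ⬝ᵥ K *ᵥ u = u ⬝ᵥ Q *ᵥ u + u ⬝ᵥ (Aᵀ * P * A) *ᵥ u := by
    rw [add_mulVec, dotProduct_add]
  simp only [mulVec_sub, sub_mulVec, sub_dotProduct, dotProduct_sub]
  rw [hP.dotProduct_mulVec_comm (A *ᵥ u) z, hcross, hcorr, hAu,
    hK.dotProduct_mulVec_comm (Λ *ᵥ t), hKΛ, hKu, dotProduct_comm (Λ *ᵥ t) t]
  ring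

lemma det_add_mul_mul [DecidableEq m] [DecidableEq n] {S : Matrix m m R} {Ω : Matrix n n R}
    (hS : IsUnit S.det) (hΩ : IsUnit Ω.det) (A : Matrix m n R) (B : Matrix n m R) :
    (S + A * Ω * B).det = S.det * Ω.det * (Ω⁻¹ + B * S⁻¹ * A).det := by
  rw [Matrix.mul_assoc, det_add_mul A (Ω * B) hS, mul_assoc, ← det_mul, Matrix.mul_add,
    mul_nonsing_inv Ω hΩ]
  simp only [Matrix.mul_assoc]

end Matrix

lemma gaussPdf_mul_gaussPdf_congr {p q : ℕ} {μ μ' y : Fin p → ℝ} {η η' x : Fin q → ℝ}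
    {S S' : Matrix (Fin p) (Fin p) ℝ} {Ω Ω' : Matrix (Fin q) (Fin q) ℝ}
    (hS : 0 ≤ S.det) (hΩ : 0 ≤ Ω.det) (hS' : 0 ≤ S'.det) (hΩ' : 0 ≤ Ω'.det)
    (hdet : S.det * Ω.det = S'.det * Ω'.det)
    (hquad : (y - μ) ⬝ᵥ S⁻¹ *ᵥ (y - μ) + (x - η) ⬝ᵥ Ω⁻¹ *ᵥ (x - η) =
      (y - μ') ⬝ᵥ S'⁻¹ *ᵥ (y - μ') + (x - η') ⬝ᵥ Ω'⁻¹ *ᵥ (x - η')) :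
    gaussPdf μ S y * gaussPdf η Ω x = gaussPdf μ' S' y * gaussPdf η' Ω' x := by
  have regroup : ∀ a d e b d' e' : ℝ,
      a * d * e * (b * d' * e') = a * b * (d * d') * (e * e') := by
    intros; ring
  rw [gaussPdf, gaussPdf, gaussPdf, gaussPdf, regroup, regroup, ← mul_rpow hS hΩ,
    ← mul_rpow hS' hΩ', hdet, ← exp_add, ← exp_add, ← mul_add, ← mul_add, hquad]

theorem stmt2_general (p q : ℕ)
    (μ : Fin p → ℝ) (η : Fin q → ℝ)
    (S : Matrix (Fin p) (Fin p) ℝ) (hS : S.PosDef)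
    (Ω : Matrix (Fin q) (Fin q) ℝ) (hΩ : Ω.PosDef)
    (A : Matrix (Fin p) (Fin q) ℝ)
    (Λ : Matrix (Fin q) (Fin q) ℝ) (hΛ : Λ = (Ω⁻¹ + Aᵀ * S⁻¹ * A)⁻¹) :
    ∀ (y : Fin p → ℝ) (x : Fin q → ℝ),
      gaussPdf (μ + A *ᵥ x) S y * gaussPdf η Ω x
        = gaussPdf (μ + A *ᵥ η) (S + A * Ω * Aᵀ) y *
          gaussPdf (η + Λ *ᵥ (Aᵀ *ᵥ (S⁻¹ *ᵥ (y - μ - A *ᵥ η)))) Λ x := by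
  intro y x
  have hK : (Ω⁻¹ + Aᵀ * S⁻¹ * A).PosDef :=
    hΩ.inv.add_posSemidef (by simpa using hS.inv.posSemidef.conjTranspose_mul_mul_same A)
  have hSAΩA : (S + A * Ω * Aᵀ).PosDef :=
    hS.add_posSemidef (by simpa using hΩ.posSemidef.mul_mul_conjTranspose_same A)
  have hΛinv : Λ⁻¹ = Ω⁻¹ + Aᵀ * S⁻¹ * A := by
    rw [hΛ, nonsing_inv_nonsing_inv _ hK.det_pos.ne'.isUnit]
  have woodbury : (S + A * Ω * Aᵀ)⁻¹ = S⁻¹ - S⁻¹ * A * Λ * Aᵀ * S⁻¹ := by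
    rw [hΛ, add_mul_mul_inv_eq_sub _ _ _ _ hS.isUnit hΩ.isUnit hK.isUnit]
  refine gaussPdf_mul_gaussPdf_congr hS.det_pos.le hΩ.det_pos.le hSAΩA.det_pos.le
    (hΛ ▸ hK.inv).det_pos.le ?_ ?_
  · rw [det_add_mul_mul hS.det_pos.ne'.isUnit hΩ.det_pos.ne'.isUnit, hΛ, det_nonsing_inv,
      Ring.inverse_eq_inv', mul_assoc, mul_inv_cancel₀ hK.det_pos.ne', mul_one]
  · have hsquare := dotProduct_mulVec_completeSquare (by simpa using hS.inv.isHermitian)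
      (by simpa using hΩ.inv.isHermitian) A (hΛ ▸ mul_nonsing_inv _ hK.det_pos.ne'.isUnit)
      (y - μ - A *ᵥ η) (x - η)
    have hy : y - (μ + A *ᵥ x) = y - μ - A *ᵥ η - A *ᵥ (x - η) := by
      rw [mulVec_sub]; abel
    rwa [woodbury, hΛinv, hy, sub_add_eq_sub_sub, sub_add_eq_sub_sub]

theorem stmt2 (p q : ℕ) (hp : 0 < p) (hq : 0 < q)
    (μ : Fin p → ℝ) (η : Fin q → ℝ)
    (S : Matrix (Fin p) (Fin p) ℝ) (hS : S.PosDef)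
    (Ω : Matrix (Fin q) (Fin q) ℝ) (hΩ : Ω.PosDef)
    (A : Matrix (Fin p) (Fin q) ℝ)
    (Λ : Matrix (Fin q) (Fin q) ℝ) (hΛ : Λ = (Ω⁻¹ + Aᵀ * S⁻¹ * A)⁻¹) :
    ∀ (y : Fin p → ℝ) (x : Fin q → ℝ),
      gaussPdf (μ + A *ᵥ x) S y * gaussPdf η Ω x
        = gaussPdf (μ + A *ᵥ η) (S + A * Ω * Aᵀ) y *
          gaussPdf (η + Λ *ᵥ (Aᵀ *ᵥ (S⁻¹ *ᵥ (y - μ - A *ᵥ η)))) Λ x :=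
  stmt2_general p q μ η S hS Ω hΩ A Λ hΛ
end

section
/- Let p be a positive integer, let λ ∈ ℝᵖ, and set δ := λ/√(1 + λᵀλ). Then for every s ∈ ℝᵖ, ∫_{ℝᵖ} exp(sᵀz) · 2 φ_p(z; 0, I_p) Φ(λᵀ z) dz = 2 exp(½ sᵀs) Φ(δᵀ s); that is, the moment generating function of the standardized p-variate skew-normal distribution with density 2 φ_p(z; 0, I_p) Φ(λᵀ z) equals M(s) = 2 exp(½ sᵀs) Φ(δᵀ s). -/
open MeasureTheory Matrix Real Set

/-- The standard normal cumulative distribution function `Φ`. -/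
noncomputable def stdNormCdf (x : ℝ) : ℝ :=
  ∫ t in Set.Iic x, (2 * Real.pi) ^ (-(1 : ℝ) / 2) * Real.exp (-t ^ 2 / 2)

/-
Completing the square, `exp (sᵀz) φ_p(z) = exp (½ sᵀs) φ_p(z - s)`; after translating `z` by
`s` the claim becomes `E Φ(λᵀZ + λᵀs) = Φ(λᵀs / √(1 + λᵀλ))` for `Z ~ N(0, I_p)`. Comparing
characteristic functions, `λᵀZ ~ N(0, λᵀλ)`, and for `X ~ N(0, v)` the average of `Φ(a - X)`
is the cdf at `a` of `N(0, v) ∗ N(0, 1) = N(0, 1 + v)`.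
-/

open ProbabilityTheory
open scoped NNReal

lemma gaussianPDFReal_zero_one (t : ℝ) :
    gaussianPDFReal 0 1 t = (2 * π) ^ (-(1 : ℝ) / 2) * exp (-t ^ 2 / 2) := by
  rw [gaussianPDFReal, NNReal.coe_one, mul_one, sub_zero, mul_one, sqrt_eq_rpow,
    ← rpow_neg (by positivity)]
  ring_nf

lemma stdNormCdf_eq_cdf_gaussianReal (x : ℝ) : stdNormCdf x = cdf (gaussianReal 0 1) x := by
  rw [cdf_eq_real, measureReal_def, gaussianReal_apply_eq_integral _ one_ne_zero,
    ENNReal.toReal_ofReal (setIntegral_nonneg measurableSet_Iic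
      fun t _ => gaussianPDFReal_nonneg 0 1 t), stdNormCdf]
  simp_rw [gaussianPDFReal_zero_one]

lemma cdf_gaussianReal_zero_eq_cdf_div_sqrt (v : ℝ≥0) (hv : v ≠ 0) (a : ℝ) :
    cdf (gaussianReal 0 v) a = cdf (gaussianReal 0 1) (a / √(v : ℝ)) := by
  have hσ : 0 < √(v : ℝ) := sqrt_pos.2 (by positivity)
  have hmap : (gaussianReal 0 1).map (√(v : ℝ) * ·) = gaussianReal 0 v := by
    rw [gaussianReal_map_const_mul, mul_zero, mul_one]
    congr 1
    ext
    simp [sq_sqrt (NNReal.coe_nonneg v)]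
  rw [cdf_eq_real, cdf_eq_real, ← hmap, map_measureReal_apply (by fun_prop) measurableSet_Iic]
  congr
  ext x
  simp [le_div_iff₀ hσ, mul_comm]

lemma integral_cdf_sub_eq_cdf_conv (μ ν : Measure ℝ) [IsProbabilityMeasure μ]
    [IsProbabilityMeasure ν] (a : ℝ) : ∫ x, cdf ν (a - x) ∂μ = cdf (μ ∗ ν) a := by
  have hind : Integrable ((Iic a).indicator (1 : ℝ → ℝ)) (μ ∗ ν) :=
    (integrable_const 1).indicator measurableSet_Iic
  rw [cdf_eq_real, ← integral_indicator_one measurableSet_Iic, integral_conv hind]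
  refine integral_congr_ae (ae_of_all _ fun x => ?_)
  have : (fun y => (Iic a).indicator (1 : ℝ → ℝ) (x + y)) = (Iic (a - x)).indicator 1 := by
    ext y
    simp only [Set.indicator, mem_Iic, le_sub_iff_add_le', Pi.one_apply]
  simp only [this, integral_indicator_one measurableSet_Iic, cdf_eq_real]

lemma map_dotProduct_pi_gaussianReal {ι : Type*} [Fintype ι] (lam : ι → ℝ) :
    (Measure.pi fun _ : ι => gaussianReal 0 1).map (lam ⬝ᵥ ·)
      = gaussianReal 0 (lam ⬝ᵥ lam).toNNReal := by
  have hprod : ∀ (t : ℝ) (z : ι → ℝ), Complex.exp (t * (lam ⬝ᵥ z : ℝ) * Complex.I)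
      = ∏ i, Complex.exp ((t * lam i : ℝ) * z i * Complex.I) := by
    intro t z
    rw [← Complex.exp_sum, dotProduct, Complex.ofReal_sum, Finset.mul_sum, Finset.sum_mul]
    push_cast
    simp only [mul_assoc]
  apply Measure.ext_of_charFun
  ext t
  rw [charFun_apply_real, integral_map (by fun_prop) (by fun_prop)]
  simp_rw [hprod]
  rw [integral_fintype_prod_eq_prod
    (fun i (x : ℝ) => Complex.exp ((t * lam i : ℝ) * x * Complex.I))]
  simp_rw [← charFun_apply_real, charFun_gaussianReal, ← Complex.exp_sum]
  have hnn : 0 ≤ lam ⬝ᵥ lam := Finset.sum_nonneg fun i _ => mul_self_nonneg (lam i)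
  rw [Real.coe_toNNReal _ hnn, dotProduct]
  push_cast
  congr 1
  simp only [mul_zero, zero_mul, zero_sub, Finset.sum_neg_distrib, Finset.sum_mul, Finset.sum_div]
  ring_nf

lemma integral_stdNormCdf_dotProduct_add {ι : Type*} [Fintype ι] (lam : ι → ℝ) (a : ℝ) :
    ∫ z, stdNormCdf (lam ⬝ᵥ z + a) ∂Measure.pi (fun _ : ι => gaussianReal 0 1)
      = stdNormCdf (a / √(1 + lam ⬝ᵥ lam)) := by
  have hnn : 0 ≤ lam ⬝ᵥ lam := Finset.sum_nonneg fun i _ => mul_self_nonneg (lam i)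
  have hsub : ∀ z, lam ⬝ᵥ z + a = a - (-lam) ⬝ᵥ z := fun z => by
    rw [neg_dotProduct, sub_neg_eq_add, add_comm]
  simp_rw [stdNormCdf_eq_cdf_gaussianReal, hsub]
  rw [← integral_map (f := fun x => cdf (gaussianReal 0 1) (a - x)) (by fun_prop)
      ((cdf _).mono.measurable.comp (measurable_const_sub a)).aestronglyMeasurable,
    map_dotProduct_pi_gaussianReal, integral_cdf_sub_eq_cdf_conv, gaussianReal_conv_gaussianReal,
    add_zero, cdf_gaussianReal_zero_eq_cdf_div_sqrt _ (by positivity)]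
  congr 3
  push_cast
  rw [neg_dotProduct_neg, Real.coe_toNNReal _ hnn, add_comm]

lemma pi_gaussianReal_eq_withDensity (ι : Type*) [Fintype ι] :
    Measure.pi (fun _ : ι => gaussianReal 0 1)
      = volume.withDensity fun z => ∏ i, gaussianPDF 0 1 (z i) := by
  refine Measure.pi_eq fun s hs => ?_
  have hint : ∀ i, Integrable (gaussianPDFReal 0 1) (volume.restrict (s i)) :=
    fun i => (integrable_gaussianPDFReal 0 1).restrict
  rw [withDensity_apply _ (MeasurableSet.univ_pi hs), volume_pi, Measure.restrict_pi_pi]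
  simp_rw [gaussianPDF_def, ← ENNReal.ofReal_prod_of_nonneg
    fun i _ => gaussianPDFReal_nonneg 0 1 _]
  rw [← ofReal_integral_eq_lintegral_ofReal (Integrable.fintype_prod hint)
      (ae_of_all _ fun z => Finset.prod_nonneg fun i _ => gaussianPDFReal_nonneg 0 1 _),
    integral_fintype_prod_eq_prod (fun _ => gaussianPDFReal 0 1),
    ENNReal.ofReal_prod_of_nonneg fun i _ =>
      setIntegral_nonneg (hs i) fun t _ => gaussianPDFReal_nonneg 0 1 t]
  simp_rw [gaussianReal_apply_eq_integral 0 one_ne_zero]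

lemma gaussPdf_zero_one_eq_prod {p : ℕ} (z : Fin p → ℝ) :
    gaussPdf 0 (1 : Matrix (Fin p) (Fin p) ℝ) z = ∏ i, gaussianPDFReal 0 1 (z i) := by
  have hpow : ((2 * π) ^ (-(1 : ℝ) / 2)) ^ p = (2 * π) ^ (-(p : ℝ) / 2) := by
    rw [← rpow_natCast, ← rpow_mul (by positivity)]
    ring_nf
  simp_rw [gaussianPDFReal_zero_one, Finset.prod_mul_distrib, ← exp_sum, Finset.prod_const,
    Finset.card_univ, Fintype.card_fin, hpow]
  rw [gaussPdf, det_one, one_rpow, mul_one, inv_one, one_mulVec, sub_zero, dotProduct,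
    Finset.mul_sum]
  congr 2
  exact Finset.sum_congr rfl fun i _ => by ring

lemma integral_gaussPdf_zero_one_mul {p : ℕ} (g : (Fin p → ℝ) → ℝ) :
    ∫ z, gaussPdf 0 (1 : Matrix (Fin p) (Fin p) ℝ) z * g z
      = ∫ z, g z ∂Measure.pi fun _ => gaussianReal 0 1 := by
  rw [pi_gaussianReal_eq_withDensity, integral_withDensity_eq_integral_toReal_smul
    (by fun_prop) (ae_of_all _ fun z => ENNReal.prod_lt_top fun i _ => gaussianPDF_lt_top)]
  simp_rw [ENNReal.toReal_prod, toReal_gaussianPDF, gaussPdf_zero_one_eq_prod, smul_eq_mul]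

lemma exp_dotProduct_mul_gaussPdf {p : ℕ} (s z : Fin p → ℝ) :
    exp (s ⬝ᵥ z) * gaussPdf 0 (1 : Matrix (Fin p) (Fin p) ℝ) z
      = exp ((1 / 2) * (s ⬝ᵥ s)) * gaussPdf s 1 z := by
  have hexp : s ⬝ᵥ z + -(1 / 2) * (z ⬝ᵥ z)
      = 1 / 2 * (s ⬝ᵥ s) + -(1 / 2) * ((z - s) ⬝ᵥ (z - s)) := by
    simp only [sub_dotProduct, dotProduct_sub, dotProduct_comm z s]
    ring
  simp only [gaussPdf, inv_one, one_mulVec, sub_zero]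
  rw [mul_left_comm, ← exp_add, hexp, exp_add]
  ring

lemma gaussPdf_add_self {p : ℕ} (μ : Fin p → ℝ) (S : Matrix (Fin p) (Fin p) ℝ)
    (z : Fin p → ℝ) :
    gaussPdf μ S (z + μ) = gaussPdf 0 S z := by
  simp only [gaussPdf, add_sub_cancel_right, sub_zero]

theorem stmt3_general (p : ℕ) (lam : Fin p → ℝ)
    (δ : Fin p → ℝ) (hδ : δ = (Real.sqrt (1 + lam ⬝ᵥ lam))⁻¹ • lam) :
    ∀ s : Fin p → ℝ,
      ∫ z : Fin p → ℝ,
          Real.exp (s ⬝ᵥ z) * (2 * gaussPdf 0 (1 : Matrix (Fin p) (Fin p) ℝ) z *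
            stdNormCdf (lam ⬝ᵥ z))
        = 2 * Real.exp ((1 / 2) * (s ⬝ᵥ s)) * stdNormCdf (δ ⬝ᵥ s) := by
  intro s
  have htilt : ∀ z, exp (s ⬝ᵥ z) * (2 * gaussPdf 0 1 z * stdNormCdf (lam ⬝ᵥ z))
      = 2 * exp ((1 / 2) * (s ⬝ᵥ s)) * (gaussPdf s 1 z * stdNormCdf (lam ⬝ᵥ z)) := by
    intro z
    rw [← mul_assoc, mul_left_comm, exp_dotProduct_mul_gaussPdf]
    ring
  have hshift : ∫ z, gaussPdf s 1 z * stdNormCdf (lam ⬝ᵥ z)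
      = ∫ z, gaussPdf 0 1 z * stdNormCdf (lam ⬝ᵥ z + lam ⬝ᵥ s) := by
    rw [← integral_add_right_eq_self _ s]
    simp only [gaussPdf_add_self, dotProduct_add]
  rw [integral_congr_ae (ae_of_all _ htilt), integral_const_mul, hshift,
    integral_gaussPdf_zero_one_mul, integral_stdNormCdf_dotProduct_add, hδ, smul_dotProduct,
    smul_eq_mul, inv_mul_eq_div]

theorem stmt3 (p : ℕ) (hp : 0 < p) (lam : Fin p → ℝ)
    (δ : Fin p → ℝ) (hδ : δ = (Real.sqrt (1 + lam ⬝ᵥ lam))⁻¹ • lam) :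
    ∀ s : Fin p → ℝ,
      ∫ z : Fin p → ℝ,
          Real.exp (s ⬝ᵥ z) * (2 * gaussPdf 0 (1 : Matrix (Fin p) (Fin p) ℝ) z *
            stdNormCdf (lam ⬝ᵥ z))
        = 2 * Real.exp ((1 / 2) * (s ⬝ᵥ s)) * stdNormCdf (δ ⬝ᵥ s) :=
  stmt3_general p lam δ hδ
end

section
/- Let p be a positive integer, μ, λ ∈ ℝᵖ, Σ a positive definite p×p real matrix, and H a probability measure on (0,∞). Let ν_Y be the measure on ℝᵖ with density f(y) = 2 ∫_0^∞ φ_p(y; μ, u⁻¹Σ) Φ(u^{1/2} λᵀ Σ^{−1/2}(y−μ)) dH(u) (the SMSN_p(μ,Σ,λ;H) law) and let ν_X be the measure on ℝᵖ with density f₀(y) = ∫_0^∞ φ_p(y; μ, u⁻¹Σ) dH(u) (the SMN_p(μ,Σ;H) law). Then for every positive integer m and every Borel measurable even function g : ℝᵖ → ℝᵐ (i.e., g(−x) = g(x) for all x), the pushforward of ν_Y under y ↦ g(y − μ) equals the pushforward of ν_X under x ↦ g(x − μ). -/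
open MeasureTheory Matrix Real Set

/-- The `SMSN_p(μ, S, lam; H)` density, where `S^{-1/2}` is the inverse of the unique
symmetric positive definite square root of `S`. -/
noncomputable def smsnPdf {p : ℕ} (μ lam : Fin p → ℝ) (S : Matrix (Fin p) (Fin p) ℝ)
    (hS : S.PosDef) (H : MeasureTheory.Measure ℝ) (y : Fin p → ℝ) : ℝ :=
  2 * ∫ u, gaussPdf μ (u⁻¹ • S) y *
      stdNormCdf (Real.sqrt u * (lam ⬝ᵥ ((open scoped MatrixOrder in CFC.sqrt S)⁻¹ *ᵥ (y - μ)))) ∂H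

/-- The `SMN_p(μ, S; H)` density. -/
noncomputable def smnPdf {p : ℕ} (μ : Fin p → ℝ) (S : Matrix (Fin p) (Fin p) ℝ)
    (H : MeasureTheory.Measure ℝ) (y : Fin p → ℝ) : ℝ :=
  ∫ u, gaussPdf μ (u⁻¹ • S) y ∂H

/-! ### Auxiliary lemmas about the one-dimensional Gaussian density -/

lemma gd_integrable : Integrable (fun t : ℝ => (2 * Real.pi) ^ (-(1:ℝ)/2) * Real.exp (-t^2/2)) := by
  apply Integrable.const_mul
  have : (fun t : ℝ => Real.exp (-t^2/2)) = fun t : ℝ => Real.exp (-(1/2) * t^2) := by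
    funext t; ring_nf
  rw [this]
  exact integrable_exp_neg_mul_sq (by norm_num)

lemma gd_total : ∫ t : ℝ, (2 * Real.pi) ^ (-(1:ℝ)/2) * Real.exp (-t^2/2) = 1 := by
  rw [MeasureTheory.integral_const_mul]
  have : (fun t : ℝ => Real.exp (-t^2/2)) = fun t : ℝ => Real.exp (-(1/2) * t^2) := by
    funext t; ring_nf
  rw [this, integral_gaussian]
  have hpi : (0:ℝ) < 2 * Real.pi := by positivity
  have : √(Real.pi / (1/2)) = (2 * Real.pi) ^ ((1:ℝ)/2) := by
    rw [Real.sqrt_eq_rpow]; norm_num; ring_nf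
  rw [this, ← Real.rpow_add hpi]
  norm_num

lemma snc_nonneg (x : ℝ) : 0 ≤ stdNormCdf x := by
  apply MeasureTheory.integral_nonneg
  intro t
  positivity

lemma snc_mono : Monotone stdNormCdf := by
  intro a b h
  apply setIntegral_mono_set gd_integrable.integrableOn
  · filter_upwards with t using by positivity
  · exact HasSubset.Subset.eventuallyLE (Iic_subset_Iic.mpr h)

lemma snc_meas : Measurable stdNormCdf := snc_mono.measurable

lemma snc_le_one (x : ℝ) : stdNormCdf x ≤ 1 := by
  rw [← gd_total]
  exact setIntegral_le_integral gd_integrable (by filter_upwards with t using by positivity)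

lemma snc_symm (x : ℝ) : stdNormCdf x + stdNormCdf (-x) = 1 := by
  have h1 : stdNormCdf (-x) = ∫ t in Set.Ioi x, (2 * Real.pi) ^ (-(1:ℝ)/2) * Real.exp (-t^2/2) := by
    have h2 := integral_comp_neg_Iic (-x) (fun t : ℝ => (2 * Real.pi) ^ (-(1:ℝ)/2) * Real.exp (-t^2/2))
    simp only [neg_neg, neg_sq] at h2
    unfold stdNormCdf
    rw [← h2]
  rw [h1]
  unfold stdNormCdf
  rw [intervalIntegral.integral_Iic_add_Ioi gd_integrable.integrableOn gd_integrable.integrableOn]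
  exact gd_total

/-! ### Auxiliary lemmas about `gaussPdf` -/

lemma smul_matrix_inv {p : ℕ} (hp : 0 < p) (S : Matrix (Fin p) (Fin p) ℝ)
    (hS : IsUnit S.det) (c : ℝ) : (c • S)⁻¹ = c⁻¹ • S⁻¹ := by
  rcases eq_or_ne c 0 with rfl | hc
  · rw [zero_smul, Matrix.inv_zero, _root_.inv_zero, zero_smul]
  · letI := invertibleOfNonzero hc
    rw [Matrix.inv_smul (A := S) c hS, invOf_eq_inv]

lemma gauss_formula {p : ℕ} (hp : 0 < p) (μ : Fin p → ℝ) (S : Matrix (Fin p) (Fin p) ℝ)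
    (hS : IsUnit S.det) (y : Fin p → ℝ) (u : ℝ) :
    gaussPdf μ (u⁻¹ • S) y =
      (2 * Real.pi) ^ (-(p : ℝ) / 2) * ((u⁻¹)^p * S.det) ^ (-(1 : ℝ) / 2) *
        Real.exp (-(1 / 2) * ((u⁻¹)⁻¹ * ((y - μ) ⬝ᵥ (S⁻¹ *ᵥ (y - μ))))) := by
  unfold gaussPdf
  rw [smul_matrix_inv hp S hS, Matrix.det_smul, Fintype.card_fin, Matrix.smul_mulVec,
    dotProduct_smul, smul_eq_mul]

lemma gauss_pos_formula {p : ℕ} (hp : 0 < p) (μ : Fin p → ℝ) (S : Matrix (Fin p) (Fin p) ℝ)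
    (hSd : 0 < S.det) (y : Fin p → ℝ) {u : ℝ} (hu : 0 < u) :
    gaussPdf μ (u⁻¹ • S) y =
      ((2 * Real.pi) ^ (-(p : ℝ) / 2) * S.det ^ (-(1 : ℝ) / 2)) *
        (u ^ ((p : ℝ) / 2) *
          Real.exp (-(u * ((y - μ) ⬝ᵥ (S⁻¹ *ᵥ (y - μ)))) / 2)) := by
  rw [gauss_formula hp μ S hSd.ne'.isUnit y u]
  have h1 : ((u⁻¹)^p * S.det : ℝ) ^ (-(1 : ℝ) / 2)
      = u ^ ((p : ℝ) / 2) * S.det ^ (-(1 : ℝ) / 2) := by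
    rw [Real.mul_rpow (by positivity) hSd.le]
    congr 1
    have hip : ((u⁻¹)^p : ℝ) = u ^ (-(p:ℝ)) := by
      rw [← Real.rpow_natCast u⁻¹ p, Real.inv_rpow hu.le, ← Real.rpow_neg hu.le]
    rw [hip, ← Real.rpow_mul hu.le]
    congr 1
    ring
  rw [h1, inv_inv]
  ring_nf

lemma bound_aux (n : ℕ) {q u : ℝ} (hq : 0 < q) (hu : 0 ≤ u) :
    u ^ ((n:ℝ)/2) * Real.exp (-(u*q)/2) ≤ Real.sqrt ((2/q)^n * n.factorial) := by
  have hx : (0:ℝ) ≤ u*q/2 := by positivity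
  have hfk : (0:ℝ) < n.factorial := by exact_mod_cast n.factorial_pos
  have h1 : (u*q/2)^n / n.factorial ≤ Real.exp (u*q/2) :=
    le_trans (Finset.single_le_sum (f := fun i => (u*q/2)^i / i.factorial)
        (fun i _ => by positivity) (Finset.self_mem_range_succ n))
      (Real.sum_le_exp_of_nonneg hx _)
  have h2 : u^n ≤ (2/q)^n * n.factorial * Real.exp (u*q/2) := by
    have he : u^n = (2/q)^n * (u*q/2)^n := by
      rw [← mul_pow]; congr 1; field_simp
    rw [he]
    have h1' : (u*q/2)^n ≤ n.factorial * Real.exp (u*q/2) := by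
      rw [div_le_iff₀ hfk] at h1; linarith [h1]
    calc (2/q)^n * (u*q/2)^n ≤ (2/q)^n * (n.factorial * Real.exp (u*q/2)) :=
          mul_le_mul_of_nonneg_left h1' (by positivity)
      _ = (2/q)^n * n.factorial * Real.exp (u*q/2) := by ring
  have h3 : u ^ ((n:ℝ)/2) = Real.sqrt (u^n) := by
    rw [Real.sqrt_eq_rpow, ← Real.rpow_natCast u n, ← Real.rpow_mul hu]
    congr 1
    ring
  have hsexp : Real.sqrt (Real.exp (u*q/2)) * Real.exp (-(u*q)/2) ≤ 1 := by
    have : Real.sqrt (Real.exp (u*q/2)) = Real.exp (u*q/4) := by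
      rw [Real.sqrt_eq_rpow, Real.rpow_def_of_pos (Real.exp_pos _), Real.log_exp]
      ring_nf
    rw [this, ← Real.exp_add]
    rw [Real.exp_le_one_iff]
    linarith [mul_nonneg hu hq.le]
  rw [h3]
  calc Real.sqrt (u^n) * Real.exp (-(u*q)/2)
      ≤ Real.sqrt ((2/q)^n * n.factorial * Real.exp (u*q/2)) * Real.exp (-(u*q)/2) :=
        mul_le_mul_of_nonneg_right (Real.sqrt_le_sqrt h2) (Real.exp_nonneg _)
    _ = Real.sqrt ((2/q)^n * n.factorial) * (Real.sqrt (Real.exp (u*q/2)) * Real.exp (-(u*q)/2)) := by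
        rw [Real.sqrt_mul (by positivity)]; ring
    _ ≤ Real.sqrt ((2/q)^n * n.factorial) * 1 :=
        mul_le_mul_of_nonneg_left hsexp (Real.sqrt_nonneg _)
    _ = Real.sqrt ((2/q)^n * n.factorial) := mul_one _
section Meas

variable {p : ℕ}

lemma quad_cont (μ : Fin p → ℝ) (M : Matrix (Fin p) (Fin p) ℝ) :
    Continuous (fun y : Fin p → ℝ => (y - μ) ⬝ᵥ (M *ᵥ (y - μ))) := by
  have hsub : Continuous (fun y : Fin p → ℝ => y - μ) := continuous_id.sub continuous_const
  exact hsub.dotProduct (continuous_const.matrix_mulVec hsub)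

lemma lin_cont (lam μ : Fin p → ℝ) (M : Matrix (Fin p) (Fin p) ℝ) :
    Continuous (fun y : Fin p → ℝ => lam ⬝ᵥ (M *ᵥ (y - μ))) :=
  continuous_const.dotProduct
    (continuous_const.matrix_mulVec (continuous_id.sub continuous_const))

lemma gauss_joint_meas (hp : 0 < p) (μ : Fin p → ℝ) (S : Matrix (Fin p) (Fin p) ℝ)
    (hS : IsUnit S.det) :
    Measurable (fun z : (Fin p → ℝ) × ℝ => gaussPdf μ (z.2⁻¹ • S) z.1) := by
  have heq : (fun z : (Fin p → ℝ) × ℝ => gaussPdf μ (z.2⁻¹ • S) z.1) =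
      fun z => (2 * Real.pi) ^ (-(p : ℝ) / 2) * ((z.2⁻¹)^p * S.det) ^ (-(1 : ℝ) / 2) *
        Real.exp (-(1 / 2) * ((z.2⁻¹)⁻¹ * ((z.1 - μ) ⬝ᵥ (S⁻¹ *ᵥ (z.1 - μ))))) :=
    funext fun z => gauss_formula hp μ S hS z.1 z.2
  rw [heq]
  have m1 : Measurable (fun z : (Fin p → ℝ) × ℝ => ((z.2⁻¹)^p * S.det) ^ (-(1 : ℝ) / 2)) := by
    have : Measurable (fun x : ℝ => x ^ (-(1 : ℝ) / 2)) := by measurability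
    exact this.comp ((measurable_snd.inv.pow_const p).mul_const _)
  have m2 : Measurable (fun z : (Fin p → ℝ) × ℝ =>
      Real.exp (-(1 / 2) * ((z.2⁻¹)⁻¹ * ((z.1 - μ) ⬝ᵥ (S⁻¹ *ᵥ (z.1 - μ)))))) := by
    apply Measurable.exp
    apply Measurable.const_mul
    exact measurable_snd.inv.inv.mul ((quad_cont μ S⁻¹).measurable.comp measurable_fst)
  exact (measurable_const.mul m1).mul m2

lemma gauss_meas (hp : 0 < p) (μ : Fin p → ℝ) (S : Matrix (Fin p) (Fin p) ℝ)
    (hS : IsUnit S.det) (y : Fin p → ℝ) :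
    Measurable (fun u : ℝ => gaussPdf μ (u⁻¹ • S) y) := by
  have heq : (fun u : ℝ => gaussPdf μ (u⁻¹ • S) y) =
      fun u => (2 * Real.pi) ^ (-(p : ℝ) / 2) * ((u⁻¹)^p * S.det) ^ (-(1 : ℝ) / 2) *
        Real.exp (-(1 / 2) * ((u⁻¹)⁻¹ * ((y - μ) ⬝ᵥ (S⁻¹ *ᵥ (y - μ))))) :=
    funext fun u => gauss_formula hp μ S hS y u
  rw [heq]
  have m1 : Measurable (fun u : ℝ => ((u⁻¹)^p * S.det) ^ (-(1 : ℝ) / 2)) := by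
    have : Measurable (fun x : ℝ => x ^ (-(1 : ℝ) / 2)) := by measurability
    exact this.comp ((measurable_inv.pow_const p).mul_const _)
  have m2 : Measurable (fun u : ℝ =>
      Real.exp (-(1 / 2) * ((u⁻¹)⁻¹ * ((y - μ) ⬝ᵥ (S⁻¹ *ᵥ (y - μ)))))) :=
    (((measurable_inv.inv.mul_const _).const_mul _).exp)
  exact (measurable_const.mul m1).mul m2

set_option maxHeartbeats 1000000 in
lemma smsn_meas (hp : 0 < p) (μ lam : Fin p → ℝ) (S : Matrix (Fin p) (Fin p) ℝ)
    (hS : S.PosDef) (H : MeasureTheory.Measure ℝ) [SFinite H] :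
    Measurable (fun y => smsnPdf μ lam S hS H y) := by
  unfold smsnPdf
  apply Measurable.const_mul
  have : Measurable (fun z : (Fin p → ℝ) × ℝ =>
      gaussPdf μ (z.2⁻¹ • S) z.1 *
        stdNormCdf (Real.sqrt z.2 * (lam ⬝ᵥ ((open scoped MatrixOrder in CFC.sqrt S)⁻¹ *ᵥ (z.1 - μ))))) := by
    apply (gauss_joint_meas hp μ S hS.det_pos.ne'.isUnit).mul
    apply snc_meas.comp
    exact (Real.continuous_sqrt.measurable.comp measurable_snd).mul
      ((lin_cont lam μ _).measurable.comp measurable_fst)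
  exact (this.stronglyMeasurable.integral_prod_right').measurable

set_option maxHeartbeats 1000000 in
lemma smn_meas (hp : 0 < p) (μ : Fin p → ℝ) (S : Matrix (Fin p) (Fin p) ℝ)
    (hS : IsUnit S.det) (H : MeasureTheory.Measure ℝ) [SFinite H] :
    Measurable (fun y => smnPdf μ S H y) := by
  unfold smnPdf
  exact ((gauss_joint_meas hp μ S hS).stronglyMeasurable.integral_prod_right').measurable

end Meas
section Main

variable {p : ℕ}

lemma ae_pos_of_H (H : MeasureTheory.Measure ℝ) (hH : H (Set.Iic 0) = 0) :
    ∀ᵐ u ∂H, 0 < u := by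
  rw [MeasureTheory.ae_iff]
  convert hH using 2
  ext u
  simp [not_lt]

lemma gauss_nonneg_ae {p : ℕ} (hp : 0 < p) (μ : Fin p → ℝ) (S : Matrix (Fin p) (Fin p) ℝ)
    (hS : S.PosDef) (y : Fin p → ℝ) {u : ℝ} (hu : 0 < u) :
    0 ≤ gaussPdf μ (u⁻¹ • S) y := by
  rw [gauss_pos_formula hp μ S hS.det_pos y hu]
  have h1 : (0:ℝ) ≤ (2 * Real.pi) ^ (-(p : ℝ) / 2) := Real.rpow_nonneg (by positivity) _
  have h2 : (0:ℝ) ≤ S.det ^ (-(1 : ℝ) / 2) := Real.rpow_nonneg hS.det_pos.le _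
  have h3 : (0:ℝ) ≤ u ^ ((p : ℝ) / 2) := Real.rpow_nonneg hu.le _
  positivity

lemma smsn_nonneg {p : ℕ} (hp : 0 < p) (μ lam : Fin p → ℝ) (S : Matrix (Fin p) (Fin p) ℝ)
    (hS : S.PosDef) (H : MeasureTheory.Measure ℝ) (hH : H (Set.Iic 0) = 0) (y : Fin p → ℝ) :
    0 ≤ smsnPdf μ lam S hS H y := by
  unfold smsnPdf
  apply mul_nonneg (by norm_num)
  apply MeasureTheory.integral_nonneg_of_ae
  filter_upwards [ae_pos_of_H H hH] with u hu
  exact mul_nonneg (gauss_nonneg_ae hp μ S hS y hu) (snc_nonneg _)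

lemma smn_nonneg {p : ℕ} (hp : 0 < p) (μ : Fin p → ℝ) (S : Matrix (Fin p) (Fin p) ℝ)
    (hS : S.PosDef) (H : MeasureTheory.Measure ℝ) (hH : H (Set.Iic 0) = 0) (y : Fin p → ℝ) :
    0 ≤ smnPdf μ S H y := by
  unfold smnPdf
  apply MeasureTheory.integral_nonneg_of_ae
  filter_upwards [ae_pos_of_H H hH] with u hu
  exact gauss_nonneg_ae hp μ S hS y hu

lemma pointwise_key {p : ℕ} (hp : 0 < p) (μ lam : Fin p → ℝ)
    (S : Matrix (Fin p) (Fin p) ℝ) (hS : S.PosDef)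
    (H : MeasureTheory.Measure ℝ) [MeasureTheory.IsProbabilityMeasure H]
    (hH : H (Set.Iic 0) = 0) (y : Fin p → ℝ) (hy : y ≠ μ) :
    smsnPdf μ lam S hS H y + smsnPdf μ lam S hS H (μ + μ - y) = 2 * smnPdf μ S H y := by
  have haeu := ae_pos_of_H H hH
  have hdet := hS.det_pos
  set q : ℝ := (y - μ) ⬝ᵥ (S⁻¹ *ᵥ (y - μ)) with hqdef
  have hq : 0 < q := by
    have h := hS.inv.dotProduct_mulVec_pos (sub_ne_zero.mpr hy)
    rwa [star_trivial] at h
  set c : ℝ := lam ⬝ᵥ ((open scoped MatrixOrder in CFC.sqrt S)⁻¹ *ᵥ (y - μ)) with hcdef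
  set K : ℝ := (2 * Real.pi) ^ (-(p : ℝ) / 2) * S.det ^ (-(1 : ℝ) / 2) with hKdef
  have hK : 0 ≤ K := by
    apply mul_nonneg (Real.rpow_nonneg (by positivity) _) (Real.rpow_nonneg hdet.le _)
  set C : ℝ := K * Real.sqrt ((2/q)^p * p.factorial) with hCdef
  have hGbnd : ∀ {u : ℝ}, 0 < u → gaussPdf μ (u⁻¹ • S) y ≤ C := by
    intro u hu
    rw [gauss_pos_formula hp μ S hdet y hu, ← hqdef, ← hKdef, hCdef]
    exact mul_le_mul_of_nonneg_left (bound_aux p hq hu.le) hK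
  -- integrability of the two signed integrands
  have hmeasG := gauss_meas hp μ S hdet.ne'.isUnit y
  have hint : ∀ c' : ℝ, MeasureTheory.Integrable
      (fun u => gaussPdf μ (u⁻¹ • S) y * stdNormCdf (Real.sqrt u * c')) H := by
    intro c'
    apply MeasureTheory.Integrable.mono' (MeasureTheory.integrable_const C)
    · exact (hmeasG.mul (snc_meas.comp
        (Real.continuous_sqrt.measurable.mul_const c'))).aestronglyMeasurable
    · filter_upwards [haeu] with u hu
      have h0 : 0 ≤ gaussPdf μ (u⁻¹ • S) y := gauss_nonneg_ae hp μ S hS y hu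
      rw [Real.norm_eq_abs, abs_of_nonneg (mul_nonneg h0 (snc_nonneg _))]
      calc gaussPdf μ (u⁻¹ • S) y * stdNormCdf (Real.sqrt u * c')
          ≤ gaussPdf μ (u⁻¹ • S) y * 1 :=
            mul_le_mul_of_nonneg_left (snc_le_one _) h0
        _ = gaussPdf μ (u⁻¹ • S) y := mul_one _
        _ ≤ C := hGbnd hu
  -- rewrite the reflected density
  have hvflip : μ + μ - y - μ = -(y - μ) := by abel
  have hflipG : ∀ u : ℝ, gaussPdf μ (u⁻¹ • S) (μ + μ - y) = gaussPdf μ (u⁻¹ • S) y := by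
    intro u
    unfold gaussPdf
    rw [hvflip, Matrix.mulVec_neg, dotProduct_neg, neg_dotProduct, neg_neg]
  have hflip : smsnPdf μ lam S hS H (μ + μ - y)
      = 2 * ∫ u, gaussPdf μ (u⁻¹ • S) y * stdNormCdf (Real.sqrt u * (-c)) ∂H := by
    unfold smsnPdf
    congr 1
    apply MeasureTheory.integral_congr_ae
    filter_upwards with u
    rw [hflipG u, hvflip, Matrix.mulVec_neg, dotProduct_neg, ← hcdef]
  rw [hflip]
  unfold smsnPdf smnPdf
  rw [← hcdef, ← mul_add, ← MeasureTheory.integral_add (hint c) (hint (-c))]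
  congr 1
  apply MeasureTheory.integral_congr_ae
  filter_upwards with u
  rw [← mul_add, mul_neg, snc_symm (Real.sqrt u * c), mul_one]

end Main
theorem stmt5 (p : ℕ) (hp : 0 < p) (μ lam : Fin p → ℝ)
    (S : Matrix (Fin p) (Fin p) ℝ) (hS : S.PosDef)
    (H : Measure ℝ) [IsProbabilityMeasure H] (hH : H (Set.Iic 0) = 0)
    (m : ℕ) (hm : 0 < m)
    (g : (Fin p → ℝ) → (Fin m → ℝ)) (hg : Measurable g)
    (heven : ∀ x, g (-x) = g x) :
    Measure.map (fun y => g (y - μ))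
        (volume.withDensity fun y => ENNReal.ofReal (smsnPdf μ lam S hS H y))
      = Measure.map (fun x => g (x - μ))
        (volume.withDensity fun y => ENNReal.ofReal (smnPdf μ S H y)) := by
  classical
  have hdet := hS.det_pos
  set fY : (Fin p → ℝ) → ENNReal := fun y => ENNReal.ofReal (smsnPdf μ lam S hS H y) with hfY
  set fX : (Fin p → ℝ) → ENNReal := fun y => ENNReal.ofReal (smnPdf μ S H y) with hfX
  have hfYmeas : Measurable fY := (smsn_meas hp μ lam S hS H).ennreal_ofReal
  have hfXmeas : Measurable fX := (smn_meas hp μ S hdet.ne'.isUnit H).ennreal_ofReal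
  have hTmeas : Measurable (fun y : Fin p → ℝ => g (y - μ)) :=
    hg.comp (measurable_id.sub measurable_const)
  -- the reflection
  set R : (Fin p → ℝ) → (Fin p → ℝ) := fun y => μ + μ - y with hRdef
  have hRR : ∀ y, R (R y) = y := by intro y; simp only [hRdef]; abel
  have hRmeas : Measurable R := measurable_const.sub measurable_id
  have hRvol : MeasurePreserving R volume volume := by
    refine ⟨hRmeas, ?_⟩
    have : R = (fun y => (μ + μ) + y) ∘ (fun y => -y) := by
      funext y; simp [hRdef, sub_eq_add_neg]
    rw [this, ← Measure.map_map (by fun_prop) (by fun_prop), Measure.map_neg_eq_self,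
      map_add_left_eq_self]
  have hRemb : MeasurableEmbedding R :=
    MeasurableEquiv.measurableEmbedding
      { toFun := R, invFun := R, left_inv := hRR, right_inv := hRR,
        measurable_toFun := hRmeas, measurable_invFun := hRmeas }
  ext s hs
  rw [Measure.map_apply hTmeas hs, Measure.map_apply hTmeas hs,
    withDensity_apply _ (hTmeas hs), withDensity_apply _ (hTmeas hs)]
  set A : Set (Fin p → ℝ) := (fun y => g (y - μ)) ⁻¹' s with hA
  have hRA : R ⁻¹' A = A := by
    ext z
    have hz : R z - μ = -(z - μ) := by simp only [hRdef]; abel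
    simp only [hA, Set.mem_preimage, hz, heven]
  have hchg : (∫⁻ y in A, fY (R y)) = ∫⁻ y in A, fY y := by
    have h := hRvol.setLIntegral_comp_preimage_emb hRemb fY A
    rwa [hRA] at h
  have hsingle : volume ({μ} : Set (Fin p → ℝ)) = 0 := by
    have h1 : ({μ} : Set (Fin p → ℝ)) = Set.pi Set.univ (fun i => {μ i}) := by
      ext z; simp [Set.mem_pi, funext_iff]
    rw [h1, volume_pi_pi]
    simp [Real.volume_singleton, zero_pow hp.ne']
  have hae : ∀ᵐ y : Fin p → ℝ, y ≠ μ := by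
    rw [ae_iff]
    convert hsingle using 2
    ext z; simp
  have hkey : ∀ᵐ y : Fin p → ℝ, fY y + fY (R y) = 2 * fX y := by
    filter_upwards [hae] with y hy
    have hreal := pointwise_key hp μ lam S hS H hH y hy
    simp only [hfY, hfX, hRdef]
    rw [← ENNReal.ofReal_add (smsn_nonneg hp μ lam S hS H hH y)
      (smsn_nonneg hp μ lam S hS H hH _), hreal, ENNReal.ofReal_mul (by norm_num)]
    norm_num
  have h2 : (2 : ENNReal) * ∫⁻ y in A, fY y = (2 : ENNReal) * ∫⁻ y in A, fX y := by
    calc (2 : ENNReal) * ∫⁻ y in A, fY y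
        = (∫⁻ y in A, fY y) + ∫⁻ y in A, fY (R y) := by rw [hchg, two_mul]
      _ = ∫⁻ y in A, (fY y + fY (R y)) :=
          (lintegral_add_left' hfYmeas.aemeasurable.restrict _).symm
      _ = ∫⁻ y in A, 2 * fX y := lintegral_congr_ae (ae_restrict_of_ae hkey)
      _ = (2 : ENNReal) * ∫⁻ y in A, fX y := lintegral_const_mul' 2 _ (by norm_num)
  exact (ENNReal.mul_right_inj (by norm_num) (by norm_num)).mp h2
end
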